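/- arXiv:1606.08728 — 6 statements merged into one kernel-verified Lean document; each statement's English description precedes it below -/
import Mathlib

section
/- Let X be a real normed space, u, v ∈ X with u ≠ 0, and f a continuous linear functional on X such that f(u) = ‖f‖·‖u‖ (f is a norming functional for u). If the function g : ℝ → ℝ, g(λ) = ‖u + λ•v‖, is differentiable at λ = 0, then f(v) = ‖f‖ · g′(0). In particular, with ‖f‖ = ψ(‖u‖) for a function ψ : ℝ₊ → ℝ₊, one gets f(v) = ψ(‖u‖) · (d/dλ ‖u + λv‖)|_{λ=0}. -/
/-!
The function `x ↦ ‖f‖ * ‖x‖ - f x` is nonnegative and vanishes at `u`, so along the line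
`λ ↦ u + λ • v` it has a minimum at `λ = 0`, where its derivative `‖f‖ * g' - f v` must vanish.
-/

namespace ContinuousLinearMap

variable {X : Type*} [NormedAddCommGroup X] [NormedSpace ℝ X]

theorem apply_le_opNorm_mul_norm (f : X →L[ℝ] ℝ) (x : X) : f x ≤ ‖f‖ * ‖x‖ :=
  (Real.le_norm_self _).trans (f.le_opNorm x)

theorem apply_deriv_eq_opNorm_mul_deriv_norm (f : X →L[ℝ] ℝ) {c : ℝ → X} {c' : X} {g' : ℝ}
    (hf : f (c 0) = ‖f‖ * ‖c 0‖) (hc : HasDerivAt c c' 0)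
    (hg : HasDerivAt (fun l => ‖c l‖) g' 0) :
    f c' = ‖f‖ * g' := by
  have hmin : IsLocalMin (fun l => ‖f‖ * ‖c l‖ - f (c l)) 0 :=
    Filter.Eventually.of_forall fun l => by
      simpa [hf] using f.apply_le_opNorm_mul_norm (c l)
  have hderiv : HasDerivAt (fun l => ‖f‖ * ‖c l‖ - f (c l)) (‖f‖ * g' - f c') 0 :=
    (hg.const_mul ‖f‖).sub (f.hasFDerivAt.comp_hasDerivAt 0 hc)
  linarith [hmin.hasDerivAt_eq_zero hderiv]

end ContinuousLinearMap

theorem norming_functional_eq_norm_mul_deriv_general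
    {X : Type*} [NormedAddCommGroup X] [NormedSpace ℝ X]
    (u v : X) (f : X →L[ℝ] ℝ)
    (hf : f u = ‖f‖ * ‖u‖)
    (g' : ℝ) (hg : HasDerivAt (fun l : ℝ => ‖u + l • v‖) g' 0) :
    f v = ‖f‖ * g' := by
  have hline : HasDerivAt (fun l : ℝ => u + l • v) v 0 := by
    simpa using ((hasDerivAt_id (0 : ℝ)).smul_const v).const_add u
  exact f.apply_deriv_eq_opNorm_mul_deriv_norm (by simpa using hf) hline hg

/-- If `f` is a norming functional for `u ≠ 0` in a real normed space
(`f u = ‖f‖ * ‖u‖`) and `λ ↦ ‖u + λ • v‖` has derivative `g'` at `0`, then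
`f v = ‖f‖ * g'`. -/
theorem norming_functional_eq_norm_mul_deriv
    {X : Type*} [NormedAddCommGroup X] [NormedSpace ℝ X]
    (u v : X) (hu : u ≠ 0) (f : X →L[ℝ] ℝ)
    (hf : f u = ‖f‖ * ‖u‖)
    (g' : ℝ) (hg : HasDerivAt (fun l : ℝ => ‖u + l • v‖) g' 0) :
    f v = ‖f‖ * g' :=
  norming_functional_eq_norm_mul_deriv_general u v f hf g' hg
end

section
/- (Fenchel duality, part (i).) Let E be a real Hausdorff locally convex topological vector space with topological dual E′, let u : E → ℝ ∪ {+∞} be a proper convex lower semicontinuous functional, and let Δ ⊆ E be a convex set. Assume μ := inf { u(e) : e ∈ Δ } is a real number and that u is finite and continuous at some point of Δ. Then μ = max { −u*(−e′) − h(e′; cl Δ) : e′ ∈ E′ with h(e′; cl Δ) < +∞ }, i.e. there exists e′ ∈ E′ attaining this value, and for every f ∈ E′ one has −u*(−f) − h(f; cl Δ) ≤ μ. -/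
open scoped Topology

/-- The convex (Legendre–Fenchel) conjugate `u*(f) = sup_e (f e − u e)` of an
`ℝ ∪ {+∞}`-valued functional, with respect to the duality `⟨E, E'⟩`. -/
noncomputable def fenchelConj {E : Type*} [AddCommGroup E] [Module ℝ E]
    [TopologicalSpace E] (u : E → EReal) (f : E →L[ℝ] ℝ) : EReal :=
  ⨆ e : E, ((f e : EReal) - u e)

/-- The support function `h(f; S) = sup_{e ∈ S} f e` of a subset `S ⊆ E`. -/
noncomputable def supportFn {E : Type*} [AddCommGroup E] [Module ℝ E]
    [TopologicalSpace E] (f : E →L[ℝ] ℝ) (S : Set E) : EReal :=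
  ⨆ e ∈ S, (f e : EReal)

/-!
Weak duality is the Fenchel–Young inequality `-u*(-f) - h(f; cl Δ) ≤ u e` for `e ∈ Δ`.
For the reverse inequality, Hahn–Banach separates the open convex set
`interior {(e, t) | u e < t}` (nonempty since `u` is finite and continuous at a point of `Δ`)
from `Δ × (-∞, μ]`. The separating functional cannot be vertical, because both sets contain
points above that point of `Δ`; normalised, it yields an affine minorant `k - φ` of `u` with
`φ + μ ≤ k` on `Δ`, so that `u*(-φ) ≤ -k` and `h(φ; cl Δ) ≤ k - μ`.
-/

open Set Filter

section Conjugate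

variable {E : Type*} [AddCommGroup E] [Module ℝ E] [TopologicalSpace E]

theorem le_fenchelConj (u : E → EReal) (f : E →L[ℝ] ℝ) (e : E) :
    (f e : EReal) - u e ≤ fenchelConj u f :=
  le_iSup (fun e => (f e : EReal) - u e) e

theorem fenchelConj_le_of_forall_sub_le {u : E → EReal} {f : E →L[ℝ] ℝ} {a : ℝ}
    (h : ∀ e, ((f e - a : ℝ) : EReal) ≤ u e) : fenchelConj u f ≤ a := by
  refine iSup_le fun e => ?_
  rw [EReal.sub_le_iff_le_add (.inr (EReal.coe_ne_top a)) (.inr (EReal.coe_ne_bot a))]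
  calc (f e : EReal) = (a : EReal) + ((f e - a : ℝ) : EReal) := by
        rw [← EReal.coe_add, add_sub_cancel]
    _ ≤ (a : EReal) + u e := add_le_add_right (h e) _

theorem le_supportFn (f : E →L[ℝ] ℝ) {S : Set E} {e : E} (he : e ∈ S) :
    (f e : EReal) ≤ supportFn f S :=
  le_iSup₂ (f := fun e (_ : e ∈ S) => (f e : EReal)) e he

theorem supportFn_closure_le {f : E →L[ℝ] ℝ} {S : Set E} {a : ℝ} (h : ∀ e ∈ S, f e ≤ a) :
    supportFn f (closure S) ≤ a :=
  iSup₂_le fun _ he => EReal.coe_le_coe_iff.mpr <|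
    closure_minimal h (isClosed_le f.continuous continuous_const) he

theorem neg_fenchelConj_neg_sub_supportFn_le {u : E → EReal} (f : E →L[ℝ] ℝ) {S : Set E}
    {e : E} (he : e ∈ S) (hbot : u e ≠ ⊥) :
    -fenchelConj u (-f) - supportFn f S ≤ u e := by
  induction h : u e with
  | bot => exact absurd h hbot
  | top => exact le_top
  | coe s =>
    have hconj : -((f e + s : ℝ) : EReal) ≤ fenchelConj u (-f) := by
      rw [← EReal.coe_neg, neg_add', EReal.coe_sub]
      simpa [h] using le_fenchelConj u (-f) e
    calc -fenchelConj u (-f) - supportFn f S ≤ ((f e + s : ℝ) : EReal) - (f e : EReal) :=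
          EReal.sub_le_sub (EReal.neg_le.mpr hconj) (le_supportFn f he)
      _ = s := by rw [← EReal.coe_sub, add_sub_cancel_left]

end Conjugate

def strictEpigraph {E : Type*} (u : E → EReal) : Set (E × ℝ) := {p | u p.1 < p.2}

section Epigraph

variable {E : Type*} {u : E → EReal}

theorem convex_strictEpigraph [AddCommGroup E] [Module ℝ E] (hbot : ∀ e, u e ≠ ⊥)
    (hconv : ∀ x y : E, ∀ a b : ℝ, 0 ≤ a → 0 ≤ b → a + b = 1 →
      u (a • x + b • y) ≤ (a : EReal) * u x + (b : EReal) * u y) :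
    Convex ℝ (strictEpigraph u) := by
  rintro ⟨x, s⟩ hx ⟨y, t⟩ hy a b ha hb hab
  simp only [strictEpigraph, mem_ofPred_eq, Prod.smul_mk, Prod.mk_add_mk, smul_eq_mul] at hx hy ⊢
  lift u x to ℝ using ⟨(hx.trans (EReal.coe_lt_top s)).ne, hbot x⟩ with p hp
  lift u y to ℝ using ⟨(hy.trans (EReal.coe_lt_top t)).ne, hbot y⟩ with q hq
  have hps : p < s := EReal.coe_lt_coe_iff.mp hx
  have hqt : q < t := EReal.coe_lt_coe_iff.mp hy
  have hreal : a * p + b * q < a * s + b * t := by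
    rcases ha.eq_or_lt with rfl | ha'
    · simp only [zero_add] at hab
      simpa [hab] using hqt
    · nlinarith [mul_le_mul_of_nonneg_left hqt.le hb]
  calc u (a • x + b • y) ≤ (a : EReal) * p + (b : EReal) * q := hp ▸ hq ▸ hconv x y a b ha hb hab
    _ = ((a * p + b * q : ℝ) : EReal) := by push_cast; rfl
    _ < ((a * s + b * t : ℝ) : EReal) := EReal.coe_lt_coe_iff.mpr hreal

theorem mk_mem_interior_strictEpigraph [TopologicalSpace E] {e₀ : E} {t : ℝ}
    (hcont : ContinuousAt u e₀) (ht : u e₀ < t) :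
    (e₀, t) ∈ interior (strictEpigraph u) := by
  obtain ⟨m, hm, hmt⟩ := EReal.lt_iff_exists_real_btwn.mp ht
  rw [mem_interior_iff_mem_nhds]
  refine mem_of_superset (prod_mem_nhds (hcont.preimage_mem_nhds (Iio_mem_nhds hm))
    (Ioi_mem_nhds (EReal.coe_lt_coe_iff.mp hmt))) ?_
  rintro ⟨e, s⟩ ⟨he, hs⟩
  exact (show u e < m from he).trans (EReal.coe_lt_coe_iff.mpr hs)

end Epigraph

theorem exists_affine_minorant_of_le_on_convex {E : Type*} [AddCommGroup E] [Module ℝ E]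
    [TopologicalSpace E] [IsTopologicalAddGroup E] [ContinuousSMul ℝ E] {u : E → EReal}
    (hbot : ∀ e, u e ≠ ⊥)
    (hconv : ∀ x y : E, ∀ a b : ℝ, 0 ≤ a → 0 ≤ b → a + b = 1 →
      u (a • x + b • y) ≤ (a : EReal) * u x + (b : EReal) * u y)
    {Δ : Set E} (hΔ : Convex ℝ Δ) {μ : ℝ} (hμ : ∀ e ∈ Δ, (μ : EReal) ≤ u e)
    {e₀ : E} (he₀ : e₀ ∈ Δ) (hfin : u e₀ ≠ ⊤) (hcont : ContinuousAt u e₀) :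
    ∃ (φ : E →L[ℝ] ℝ) (k : ℝ), (∀ e ∈ Δ, φ e + μ ≤ k) ∧ ∀ e, ((k - φ e : ℝ) : EReal) ≤ u e := by
  have hA := convex_strictEpigraph hbot hconv
  have hdisj : Disjoint (interior (strictEpigraph u)) (Δ ×ˢ Iic μ) := by
    rw [disjoint_left]
    rintro ⟨e, t⟩ hint ⟨he, ht⟩
    exact (hμ e he).not_gt ((interior_subset hint).trans_le (EReal.coe_le_coe_iff.mpr ht))
  obtain ⟨f, c, hf_int, hf_low⟩ :=
    geometric_hahn_banach_open hA.interior isOpen_interior (hΔ.prod (convex_Iic μ)) hdisj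
  obtain ⟨t₀, ht₀, -⟩ := EReal.lt_iff_exists_real_btwn.mp hfin.lt_top
  have hint₀ := mk_mem_interior_strictEpigraph hcont ht₀
  have hμt₀ : μ < t₀ := EReal.coe_lt_coe_iff.mp ((hμ e₀ he₀).trans_lt ht₀)
  -- a convex set with nonempty interior lies in the closure of its interior
  have hf_epi : ∀ p ∈ strictEpigraph u, f p ≤ c := fun p hp =>
    closure_minimal (fun q hq => (hf_int q hq).le) (isClosed_le f.continuous continuous_const)
      ((hA.closure_interior_eq_closure_of_nonempty_interior ⟨_, hint₀⟩).symm ▸ subset_closure hp)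
  set g : E →L[ℝ] ℝ := f.comp (ContinuousLinearMap.inl ℝ E ℝ)
  set α : ℝ := f (0, 1)
  have hsplit : ∀ e t, f (e, t) = g e + t * α := fun e t => by
    rw [show ((e, t) : E × ℝ) = (e, 0) + t • (0, 1) by simp, map_add, map_smul, smul_eq_mul]
    rfl
  have hα : α < 0 := by
    have h₁ := hsplit e₀ μ ▸ hf_low (e₀, μ) ⟨he₀, self_mem_Iic⟩
    have h₂ := hsplit e₀ t₀ ▸ hf_int (e₀, t₀) hint₀
    nlinarith
  refine ⟨α⁻¹ • g, c / α, fun e he => ?_, fun e => ?_⟩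
  · have h := hsplit e μ ▸ hf_low (e, μ) ⟨he, self_mem_Iic⟩
    calc (α⁻¹ • g) e + μ = (g e + μ * α) / α := by
          rw [smul_apply, smul_eq_mul, add_div, mul_div_cancel_right₀ _ hα.ne, inv_mul_eq_div]
      _ ≤ c / α := div_le_div_of_nonpos_of_le hα.le h
  · refine EReal.le_of_forall_lt_iff_le.mp fun t ht => EReal.coe_le_coe_iff.mpr ?_
    have h := hsplit e t ▸ hf_epi (e, t) ht
    calc c / α - (α⁻¹ • g) e = (c - g e) / α := by
          rw [smul_apply, smul_eq_mul, sub_div, inv_mul_eq_div]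
      _ ≤ t := (div_le_iff_of_neg hα).mpr (by linarith)

theorem fenchel_duality_value_general
    {E : Type*} [AddCommGroup E] [Module ℝ E] [TopologicalSpace E]
    [IsTopologicalAddGroup E] [ContinuousSMul ℝ E]
    (u : E → EReal)
    (hne_bot : ∀ e : E, u e ≠ ⊥)
    (hconv : ∀ x y : E, ∀ a b : ℝ, 0 ≤ a → 0 ≤ b → a + b = 1 →
      u (a • x + b • y) ≤ (a : EReal) * u x + (b : EReal) * u y)
    (Δ : Set E) (hΔ : Convex ℝ Δ)
    (μ : ℝ) (hμ : (μ : EReal) = ⨅ e ∈ Δ, u e)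
    (hcont : ∃ e₀ ∈ Δ, u e₀ ≠ ⊤ ∧ ContinuousAt u e₀) :
    (∃ e' : E →L[ℝ] ℝ, supportFn e' (closure Δ) ≠ ⊤ ∧
        -(fenchelConj u (-e')) - supportFn e' (closure Δ) = (μ : EReal)) ∧
      ∀ f : E →L[ℝ] ℝ,
        -(fenchelConj u (-f)) - supportFn f (closure Δ) ≤ (μ : EReal) := by
  obtain ⟨e₀, he₀, hfin, hcont⟩ := hcont
  have weak : ∀ f : E →L[ℝ] ℝ, -fenchelConj u (-f) - supportFn f (closure Δ) ≤ (μ : EReal) :=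
    fun f => hμ ▸ le_iInf₂ fun e he =>
      neg_fenchelConj_neg_sub_supportFn_le f (subset_closure he) (hne_bot e)
  obtain ⟨φ, k, hφΔ, hφu⟩ := exists_affine_minorant_of_le_on_convex hne_bot hconv hΔ
    (fun e he => hμ ▸ iInf₂_le e he) he₀ hfin hcont
  have hsupp : supportFn φ (closure Δ) ≤ ((k - μ : ℝ) : EReal) :=
    supportFn_closure_le fun e he => le_sub_iff_add_le.mpr (hφΔ e he)
  have hconj : (k : EReal) ≤ -fenchelConj u (-φ) := by
    refine EReal.le_neg.mpr (fenchelConj_le_of_forall_sub_le fun e => ?_)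
    simpa only [neg_apply, sub_neg_eq_add, neg_add_eq_sub] using hφu e
  refine ⟨⟨φ, ne_top_of_le_ne_top (EReal.coe_ne_top _) hsupp, le_antisymm (weak φ) ?_⟩, weak⟩
  calc (μ : EReal) = (k : EReal) - ((k - μ : ℝ) : EReal) := by rw [← EReal.coe_sub, sub_sub_cancel]
    _ ≤ _ := EReal.sub_le_sub hconj hsupp

/-- Fenchel duality, part (i): if `u` is proper convex lsc on a real
Hausdorff locally convex space `E`, `Δ ⊆ E` is convex, `μ = inf_Δ u ∈ ℝ`, and `u` is
finite and continuous at some point of `Δ`, then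
`μ = max {−u*(−e') − h(e'; cl Δ) : e' ∈ E', h(e'; cl Δ) < +∞}`. -/
theorem fenchel_duality_value
    {E : Type*} [AddCommGroup E] [Module ℝ E] [TopologicalSpace E]
    [IsTopologicalAddGroup E] [ContinuousSMul ℝ E] [LocallyConvexSpace ℝ E] [T2Space E]
    (u : E → EReal)
    (hne_bot : ∀ e : E, u e ≠ ⊥)
    (hproper : ∃ e : E, u e ≠ ⊤)
    (hconv : ∀ x y : E, ∀ a b : ℝ, 0 ≤ a → 0 ≤ b → a + b = 1 →
      u (a • x + b • y) ≤ (a : EReal) * u x + (b : EReal) * u y)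
    (hlsc : LowerSemicontinuous u)
    (Δ : Set E) (hΔ : Convex ℝ Δ)
    (μ : ℝ) (hμ : (μ : EReal) = ⨅ e ∈ Δ, u e)
    (hcont : ∃ e₀ ∈ Δ, u e₀ ≠ ⊤ ∧ ContinuousAt u e₀) :
    (∃ e' : E →L[ℝ] ℝ, supportFn e' (closure Δ) ≠ ⊤ ∧
        -(fenchelConj u (-e')) - supportFn e' (closure Δ) = (μ : EReal)) ∧
      ∀ f : E →L[ℝ] ℝ,
        -(fenchelConj u (-f)) - supportFn f (closure Δ) ≤ (μ : EReal) :=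
  fenchel_duality_value_general u hne_bot hconv Δ hΔ μ hμ hcont
end

section
/- (Fenchel duality, part (ii): characterization of minimizers.) Let E be a real Hausdorff locally convex topological vector space with topological dual E′, u : E → ℝ ∪ {+∞} proper convex lower semicontinuous, and Δ ⊆ E a closed convex set. Assume μ := inf { u(e) : e ∈ Δ } is a real number and u is finite and continuous at some point of Δ. Then for e ∈ E the following are equivalent: (a) e ∈ Δ and u(e) = μ; (b) there exists e′ ∈ E′ such that u(e) + u*(−e′) = −e′(e) and e ∈ Δ with h(e′; Δ) = e′(e). (Condition (b) says e ∈ ∂u*(−e′) ∩ ∂h(e′; Δ).) -/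
/-!
If `e'` satisfies the two equalities, the Fenchel equality says that `x ↦ u e - e' (x - e)` is
an affine minorant of `u`, and the support-function equality says that `-e' (x - e) ≥ 0` on `Δ`;
hence `u ≥ u e` on `Δ`. Conversely, if `e` minimises `u` on `Δ`, the Hahn–Banach theorem
separates the interior of the epigraph of `u`, which is nonempty because `u` is continuous at
`e₀`, from `Δ × {μ}`. The separating hyperplane passes through `(e, μ)`, and it is not vertical
because both sets meet the vertical line through `e₀ ∈ Δ`. Written as the graph of an affine map
over `E`, its slope `g` is a subgradient of `u` at `e` that is minimised on `Δ` at `e`, and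
`e' = -g`.
-/

open Filter Topology

theorem isMinOn_iff_eq_biInf {α β : Type*} [CompleteLattice β] {f : α → β} {s : Set α}
    {a : α} (ha : a ∈ s) : IsMinOn f s a ↔ f a = ⨅ x ∈ s, f x :=
  ⟨fun h => le_antisymm (le_iInf₂ fun _ hx => h hx) (iInf₂_le a ha),
    fun h x hx => h ▸ iInf₂_le x hx⟩

namespace EReal

theorem le_of_coe_sub_le_coe_sub {a b : EReal} {r s : ℝ} (h : (r : EReal) - a ≤ s - b)
    (hsr : s ≤ r) : b ≤ a := by
  induction a <;> induction b <;> simp_all [← EReal.coe_sub]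
  linarith

theorem eq_coe_sub_of_add_eq_coe {a b : EReal} {r : ℝ} (h : a + b = r) : b = r - a := by
  induction a <;> induction b <;> simp_all [← EReal.coe_sub, ← EReal.coe_add]
  linarith

theorem coe_sub_le_of_forall_le_coe {a : EReal} {r C : ℝ}
    (h : ∀ t : ℝ, a ≤ t → r - t ≤ C) : (r : EReal) - a ≤ C := by
  induction a with
  | bot => linarith [h (r - C - 1) bot_le]
  | coe a => exact_mod_cast h a le_rfl
  | top => simp

end EReal

section

variable {E : Type*}

theorem fenchelConj_eq_sub_iff [AddCommGroup E] [Module ℝ E] [TopologicalSpace E]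
    {u : E → EReal} {f : E →L[ℝ] ℝ} {e : E} :
    fenchelConj u f = f e - u e ↔ ∀ x, (f x : EReal) - u x ≤ f e - u e :=
  ⟨fun h x => h ▸ le_iSup (fun x => (f x : EReal) - u x) x,
    fun h => le_antisymm (iSup_le h) (le_iSup (fun x => (f x : EReal) - u x) e)⟩

theorem supportFn_eq_iff [AddCommGroup E] [Module ℝ E] [TopologicalSpace E]
    {f : E →L[ℝ] ℝ} {S : Set E} {e : E} (he : e ∈ S) :
    supportFn f S = f e ↔ ∀ y ∈ S, f y ≤ f e := by
  simp only [← EReal.coe_le_coe_iff]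
  exact ⟨fun h y hy => h ▸ le_iSup₂ (f := fun y (_ : y ∈ S) => (f y : EReal)) y hy,
    fun h => le_antisymm (iSup₂_le h)
      (le_iSup₂ (f := fun y (_ : y ∈ S) => (f y : EReal)) e he)⟩

def epigraph (u : E → EReal) : Set (E × ℝ) := {p | u p.1 ≤ p.2}

theorem convex_epigraph [AddCommGroup E] [Module ℝ E] {u : E → EReal}
    (hconv : ∀ x y : E, ∀ a b : ℝ, 0 ≤ a → 0 ≤ b → a + b = 1 →
      u (a • x + b • y) ≤ (a : EReal) * u x + (b : EReal) * u y) :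
    Convex ℝ (epigraph u) := by
  rintro ⟨x, s⟩ (hx : u x ≤ s) ⟨y, t⟩ (hy : u y ≤ t) a b ha hb hab
  calc u (a • x + b • y) ≤ (a : EReal) * u x + (b : EReal) * u y := hconv x y a b ha hb hab
    _ ≤ (a : EReal) * s + (b : EReal) * t :=
      add_le_add (mul_le_mul_of_nonneg_left hx (EReal.coe_nonneg.2 ha))
        (mul_le_mul_of_nonneg_left hy (EReal.coe_nonneg.2 hb))
    _ = ((a • (x, s) + b • (y, t)).2 : ℝ) := by simp

theorem mk_mem_interior_epigraph [TopologicalSpace E] {u : E → EReal} {x : E} {t : ℝ}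
    (hu : ContinuousAt u x) (ht : u x < t) : (x, t) ∈ interior (epigraph u) := by
  obtain ⟨s, hxs, hst⟩ := EReal.lt_iff_exists_real_btwn.1 ht
  rw [mem_interior_iff_mem_nhds]
  refine mem_of_superset (prod_mem_nhds (hu.preimage_mem_nhds (Iio_mem_nhds hxs))
    (Ioi_mem_nhds (EReal.coe_lt_coe_iff.1 hst))) ?_
  rintro ⟨y, r⟩ ⟨hy, hr⟩
  exact (lt_trans hy (EReal.coe_lt_coe_iff.2 hr)).le

theorem disjoint_interior_epigraph_prod [TopologicalSpace E] {u : E → EReal} {Δ : Set E}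
    {μ : ℝ} (hμ : ∀ x ∈ Δ, (μ : EReal) ≤ u x) :
    Disjoint (interior (epigraph u)) (Δ ×ˢ {μ}) := by
  rw [Set.disjoint_left]
  rintro ⟨x, t⟩ hint ⟨hx, ht : t = μ⟩
  rw [ht] at hint
  have hnear : ∀ᶠ s : ℝ in 𝓝[<] μ, u x ≤ s := nhdsWithin_le_nhds <|
    (by fun_prop : Continuous fun s : ℝ => (x, s)).continuousAt.preimage_mem_nhds
      (mem_interior_iff_mem_nhds.1 hint)
  obtain ⟨s, hs, hsμ⟩ := (hnear.and self_mem_nhdsWithin).exists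
  exact (EReal.coe_le_coe_iff.1 ((hμ x hx).trans hs)).not_gt hsμ

theorem exists_subgradient_of_isMinOn [AddCommGroup E] [Module ℝ E] [TopologicalSpace E]
    [IsTopologicalAddGroup E] [ContinuousSMul ℝ E] {u : E → EReal} {Δ : Set E} {e e₀ : E}
    {μ : ℝ} (hconv : Convex ℝ (epigraph u)) (hΔ : Convex ℝ Δ) (he : e ∈ Δ)
    (hmin : IsMinOn u Δ e) (hue : u e = μ)
    (he₀ : e₀ ∈ Δ) (hue₀ : u e₀ ≠ ⊤) (hcont : ContinuousAt u e₀) :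
    ∃ g : E →L[ℝ] ℝ,
      (∀ x, (g x : EReal) - u x ≤ g e - u e) ∧ ∀ y ∈ Δ, g e ≤ g y := by
  obtain ⟨r₀, hr₀, -⟩ := EReal.lt_iff_exists_real_btwn.1 hue₀.lt_top
  have hint : (e₀, r₀) ∈ interior (epigraph u) := mk_mem_interior_epigraph hcont hr₀
  obtain ⟨F, c, hFint, hFΔ⟩ := geometric_hahn_banach_open hconv.interior
    isOpen_interior (hΔ.prod (convex_singleton μ))
    (disjoint_interior_epigraph_prod fun x hx => hue ▸ hmin hx)
  have hFepi : ∀ p ∈ epigraph u, F p ≤ c := by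
    refine fun p hp => closure_minimal (fun q hq => (hFint q hq).le)
      (isClosed_le F.continuous continuous_const) ?_
    rw [hconv.closure_interior_eq_closure_of_nonempty_interior ⟨_, hint⟩]
    exact subset_closure hp
  have hF : ∀ x t, F (x, t) = F (x, 0) + t * F (0, 1) := fun x t => by
    rw [← smul_eq_mul, ← map_smul, ← map_add, Prod.smul_mk, smul_zero, smul_eq_mul, mul_one,
      Prod.mk_add_mk, add_zero, zero_add]
  have hc : F (e, μ) = c := le_antisymm (hFepi _ hue.le) (hFΔ _ ⟨he, rfl⟩)
  -- `F (0, 1) ≤ 0` because `(e, μ + 1)` lies in the epigraph, and `F (0, 1) ≠ 0` because `F`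
  -- separates `(e₀, r₀)` strictly from `(e₀, μ)`.
  have hβ : F (0, 1) < 0 := by
    have h_up := hFepi (e, μ + 1) (hue.trans_le (by norm_cast; linarith))
    have h_int := hFint _ hint
    have h_Δ := hFΔ (e₀, μ) ⟨he₀, rfl⟩
    rw [hF e] at h_up hc
    rw [hF e₀] at h_int h_Δ
    refine lt_of_le_of_ne (by linarith) fun h0 => ?_
    rw [h0] at h_int h_Δ
    linarith
  set g : E →L[ℝ] ℝ := (-F (0, 1))⁻¹ • F.comp (ContinuousLinearMap.inl ℝ E ℝ)
  have hG : ∀ x t, F (x, t) = -F (0, 1) * (g x - t) := fun x t => by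
    rw [hF, mul_sub, smul_apply, smul_eq_mul, ← mul_assoc,
      mul_inv_cancel₀ (neg_pos.2 hβ).ne', one_mul]
    simp only [ContinuousLinearMap.comp_apply, ContinuousLinearMap.inl_apply]
    ring
  refine ⟨g, fun x => ?_, fun y hy => ?_⟩
  · rw [hue, ← EReal.coe_sub]
    refine EReal.coe_sub_le_of_forall_le_coe fun t ht => ?_
    have := hFepi (x, t) ht
    rw [← hc, hG x t, hG e μ] at this
    exact le_of_mul_le_mul_left this (neg_pos.2 hβ)
  · have := hFΔ (y, μ) ⟨hy, rfl⟩
    rw [← hc, hG y μ, hG e μ] at this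
    linarith [le_of_mul_le_mul_left this (neg_pos.2 hβ)]

theorem isMinOn_of_fenchelConj_neg_eq_sub [AddCommGroup E] [Module ℝ E] [TopologicalSpace E]
    {u : E → EReal} {f : E →L[ℝ] ℝ} {S : Set E} {e : E}
    (hconj : fenchelConj u (-f) = (-f) e - u e) (hS : ∀ y ∈ S, f y ≤ f e) : IsMinOn u S e :=
  fun x hx => EReal.le_of_coe_sub_le_coe_sub (fenchelConj_eq_sub_iff.1 hconj x)
    (neg_le_neg (hS x hx))

end

theorem fenchel_duality_minimizers_general
    {E : Type*} [AddCommGroup E] [Module ℝ E] [TopologicalSpace E]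
    [IsTopologicalAddGroup E] [ContinuousSMul ℝ E]
    (u : E → EReal)
    (hconv : ∀ x y : E, ∀ a b : ℝ, 0 ≤ a → 0 ≤ b → a + b = 1 →
      u (a • x + b • y) ≤ (a : EReal) * u x + (b : EReal) * u y)
    (Δ : Set E) (hΔconv : Convex ℝ Δ)
    (μ : ℝ) (hμ : (μ : EReal) = ⨅ e ∈ Δ, u e)
    (hcont : ∃ e₀ ∈ Δ, u e₀ ≠ ⊤ ∧ ContinuousAt u e₀) :
    ∀ e : E,
      (e ∈ Δ ∧ u e = (μ : EReal)) ↔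
      (∃ e' : E →L[ℝ] ℝ,
        u e + fenchelConj u (-e') = ((-e') e : EReal) ∧
        e ∈ Δ ∧ supportFn e' Δ = (e' e : EReal)) := by
  intro e
  constructor
  · rintro ⟨he, hue⟩
    obtain ⟨e₀, he₀, hue₀, hcont₀⟩ := hcont
    obtain ⟨g, hg, hgΔ⟩ := exists_subgradient_of_isMinOn (convex_epigraph hconv) hΔconv he
      ((isMinOn_iff_eq_biInf he).2 (hue.trans hμ)) hue he₀ hue₀ hcont₀
    refine ⟨-g, ?_, he, (supportFn_eq_iff he).2 fun y hy => neg_le_neg (hgΔ y hy)⟩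
    rw [neg_neg, fenchelConj_eq_sub_iff.2 hg, hue, ← EReal.coe_sub, ← EReal.coe_add,
      add_sub_cancel]
  · rintro ⟨e', hfen, he, hsupp⟩
    refine ⟨he, ((isMinOn_iff_eq_biInf he).1 ?_).trans hμ.symm⟩
    exact isMinOn_of_fenchelConj_neg_eq_sub (EReal.eq_coe_sub_of_add_eq_coe hfen)
      ((supportFn_eq_iff he).1 hsupp)

/-- Fenchel duality, part (ii): characterization of minimizers: under the
hypotheses of part (i), with `Δ` closed convex, `e ∈ Δ` minimizes `u` on `Δ` (with value
`μ`) iff there is `e' ∈ E'` with `u e + u*(−e') = −e'(e)` and `e ∈ Δ`, `h(e'; Δ) = e'(e)`,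
i.e. `e ∈ ∂u*(−e') ∩ ∂h(e'; Δ)`. -/
theorem fenchel_duality_minimizers
    {E : Type*} [AddCommGroup E] [Module ℝ E] [TopologicalSpace E]
    [IsTopologicalAddGroup E] [ContinuousSMul ℝ E] [LocallyConvexSpace ℝ E] [T2Space E]
    (u : E → EReal)
    (hne_bot : ∀ e : E, u e ≠ ⊥)
    (hproper : ∃ e : E, u e ≠ ⊤)
    (hconv : ∀ x y : E, ∀ a b : ℝ, 0 ≤ a → 0 ≤ b → a + b = 1 →
      u (a • x + b • y) ≤ (a : EReal) * u x + (b : EReal) * u y)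
    (hlsc : LowerSemicontinuous u)
    (Δ : Set E) (hΔconv : Convex ℝ Δ) (hΔcl : IsClosed Δ)
    (μ : ℝ) (hμ : (μ : EReal) = ⨅ e ∈ Δ, u e)
    (hcont : ∃ e₀ ∈ Δ, u e₀ ≠ ⊤ ∧ ContinuousAt u e₀) :
    ∀ e : E,
      (e ∈ Δ ∧ u e = (μ : EReal)) ↔
      (∃ e' : E →L[ℝ] ℝ,
        u e + fenchelConj u (-e') = ((-e') e : EReal) ∧
        e ∈ Δ ∧ supportFn e' Δ = (e' e : EReal)) :=
  fenchel_duality_minimizers_general u hconv Δ hΔconv μ hμ hcont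
end

section
/- Let E be a real Hausdorff locally convex topological vector space with topological dual E′, and Φ : E → ℝ ∪ {+∞} a proper convex lower semicontinuous functional. Let e′₀, …, e′ₙ ∈ E′, α₀, …, αₙ ∈ ℝ, and Γ = { e ∈ E : e′_k(e) = α_k for k = 0,…,n }. Suppose Φ is finite and continuous at some point of Γ, and that ē ∈ Γ attains the finite infimum of Φ over Γ. Then there exist λ̄₀, …, λ̄ₙ ∈ ℝ such that Φ(ē) + Φ*( Σ_{k=0}^{n} λ̄_k e′_k ) = Σ_{k=0}^{n} λ̄_k α_k; that is, ē ∈ ∂Φ*( Σ_{k=0}^{n} λ̄_k e′_k ) = B_Φ( Σ λ̄_k e′_k ). -/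
open Set Filter Topology

section Epigraph

variable {E : Type*} [TopologicalSpace E] {D : Set E} {F : E → ℝ} {x : E}

lemma mem_closure_strictEpigraph (hx : x ∈ D) :
    (x, F x) ∈ closure {p : E × ℝ | p.1 ∈ D ∧ F p.1 < p.2} := by
  have h : Tendsto (fun t : ℝ => (x, t)) (𝓝[>] (F x)) (𝓝 (x, F x)) :=
    ((continuous_const.prodMk continuous_id).tendsto (F x)).mono_left nhdsWithin_le_nhds
  exact mem_closure_of_tendsto h (eventually_nhdsWithin_of_forall fun _ ht => ⟨hx, ht⟩)

lemma mem_interior_strictEpigraph {t : ℝ} (hD : D ∈ 𝓝 x) (hF : ContinuousAt F x)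
    (ht : F x < t) : (x, t) ∈ interior {p : E × ℝ | p.1 ∈ D ∧ F p.1 < p.2} :=
  mem_interior_iff_mem_nhds.2 <| (continuousAt_fst.eventually_mem hD).and <|
    (hF.comp continuousAt_fst).eventually_lt continuousAt_snd ht

end Epigraph

section ConvexAnalysis

variable {E : Type*} [AddCommGroup E] [Module ℝ E] {Φ : E → EReal}

lemma convexOn_toReal_of_ereal (hne_bot : ∀ e, Φ e ≠ ⊥)
    (hconv : ∀ x y : E, ∀ a b : ℝ, 0 ≤ a → 0 ≤ b → a + b = 1 →
      Φ (a • x + b • y) ≤ (a : EReal) * Φ x + (b : EReal) * Φ y) :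
    ConvexOn ℝ {x | Φ x ≠ ⊤} fun x => (Φ x).toReal := by
  have key {x y : E} (hx : Φ x ≠ ⊤) (hy : Φ y ≠ ⊤) {a b : ℝ} (ha : 0 ≤ a) (hb : 0 ≤ b)
      (hab : a + b = 1) :
      Φ (a • x + b • y) ≤ Real.toEReal (a * (Φ x).toReal + b * (Φ y).toReal) := by
    rw [EReal.coe_add, EReal.coe_mul, EReal.coe_mul, EReal.coe_toReal hx (hne_bot x),
      EReal.coe_toReal hy (hne_bot y)]
    exact hconv x y a b ha hb hab
  refine ⟨fun x hx y hy a b ha hb hab => ((key hx hy ha hb hab).trans_lt (EReal.coe_lt_top _)).ne,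
    fun x hx y hy a b ha hb hab => ?_⟩
  simpa only [EReal.toReal_coe, smul_eq_mul] using
    EReal.toReal_le_toReal (key hx hy ha hb hab) (hne_bot _) (EReal.coe_ne_top _)

variable [TopologicalSpace E]

lemma fenchelConj_eq_of_forall_sub_le (hne_bot : ∀ e, Φ e ≠ ⊥) {g : E →L[ℝ] ℝ} {x : E}
    (hx : Φ x ≠ ⊤) (h : ∀ y, Φ y ≠ ⊤ → g y - (Φ y).toReal ≤ g x - (Φ x).toReal) :
    fenchelConj Φ g = ((g x - (Φ x).toReal : ℝ) : EReal) := by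
  refine le_antisymm (iSup_le fun y => ?_) ?_
  · by_cases hy : Φ y = ⊤
    · simp [hy]
    · rw [← EReal.coe_toReal hy (hne_bot y), ← EReal.coe_sub, EReal.coe_le_coe_iff]
      exact h y hy
  · rw [EReal.coe_sub, EReal.coe_toReal hx (hne_bot x)]
    exact le_iSup (fun y => (g y : EReal) - Φ y) x

lemma ContinuousLinearMap.apply_prod_real (f : E × ℝ →L[ℝ] ℝ) (e : E) (t : ℝ) :
    f (e, t) = f (e, 0) + t * f (0, 1) := by
  rw [← smul_eq_mul, ← map_smul, ← map_add, Prod.smul_mk, smul_zero, smul_eq_mul, mul_one,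
    Prod.mk_add_mk, add_zero, zero_add]

theorem exists_sum_smul_eq_of_le_on_level {ι : Type*} [Fintype ι] (e' : ι → E →L[ℝ] ℝ)
    (α : ι → ℝ) {g : E →L[ℝ] ℝ} {x : E} (hx : ∀ k, e' k x = α k)
    (hg : ∀ y, (∀ k, e' k y = α k) → g x ≤ g y) : ∃ lam : ι → ℝ, ∑ k, lam k • e' k = g := by
  have hker : ⨅ k, LinearMap.ker (e' k : E →ₗ[ℝ] ℝ) ≤ LinearMap.ker (g : E →ₗ[ℝ] ℝ) := by
    intro y hy
    simp only [Submodule.mem_iInf, LinearMap.mem_ker, ContinuousLinearMap.coe_coe] at hy ⊢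
    have h := hg (x - g y • y) fun k => by simp [hx k, hy k]
    simp only [map_sub, map_smul, smul_eq_mul] at h
    nlinarith
  obtain ⟨lam, hlam⟩ :=
    (Submodule.mem_span_range_iff_exists_fun ℝ).1 (mem_span_of_iInf_ker_le_ker hker)
  exact ⟨lam, ContinuousLinearMap.coe_injective (by simpa using hlam)⟩

variable [IsTopologicalAddGroup E] [ContinuousSMul ℝ E]

theorem exists_separation_of_disjoint_interior {s t : Set E} (hs : Convex ℝ s)
    (ht : Convex ℝ t) (hst : Disjoint (interior s) t) (hsint : (interior s).Nonempty) :
    ∃ (f : E →L[ℝ] ℝ) (u : ℝ), (∀ a ∈ interior s, f a < u) ∧ (∀ a ∈ closure s, f a ≤ u) ∧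
      ∀ b ∈ t, u ≤ f b := by
  obtain ⟨f, u, hfs, hft⟩ := geometric_hahn_banach_open hs.interior isOpen_interior ht hst
  refine ⟨f, u, hfs, fun a ha => ?_, hft⟩
  rw [← hs.closure_interior_eq_closure_of_nonempty_interior hsint] at ha
  exact closure_minimal (fun a ha => (hfs a ha).le) (isClosed_Iic.preimage f.continuous) ha

theorem exists_subgradient_of_isMinOn_inter {C D : Set E} {F : E → ℝ} (hC : Convex ℝ C)
    (hF : ConvexOn ℝ D F) {x₀ x : E} (hx₀C : x₀ ∈ C) (hx₀D : D ∈ 𝓝 x₀)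
    (hFx₀ : ContinuousAt F x₀) (hx : x ∈ C ∩ D) (hmin : IsMinOn F (C ∩ D) x) :
    ∃ g : E →L[ℝ] ℝ, (∀ y ∈ D, g y - F y ≤ g x - F x) ∧ ∀ y ∈ C, g x ≤ g y := by
  set A := {p : E × ℝ | p.1 ∈ D ∧ F p.1 < p.2}
  have hA₀ := mem_interior_strictEpigraph hx₀D hFx₀ (lt_add_one (F x₀))
  have hdisj : Disjoint (interior A) (C ×ˢ Iic (F x)) := by
    refine Set.disjoint_left.2 fun ⟨y, t⟩ hyA ⟨hyC, hty⟩ => ?_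
    obtain ⟨hyD, hyt⟩ := interior_subset hyA
    exact (hmin ⟨hyC, hyD⟩).not_gt (hyt.trans_le hty)
  obtain ⟨f, u, hint, hcl, hB⟩ := exists_separation_of_disjoint_interior
    hF.convex_strict_epigraph (hC.prod (convex_Iic _)) hdisj ⟨_, hA₀⟩
  set φ := f.comp (ContinuousLinearMap.inl ℝ E ℝ)
  set c := f (0, 1)
  have hf (y : E) (t : ℝ) : f (y, t) = φ y + t * c := f.apply_prod_real y t
  have h_epi (y : E) (hy : y ∈ D) : φ y + F y * c ≤ u :=
    hf y (F y) ▸ hcl _ (mem_closure_strictEpigraph hy)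
  have h_low (y : E) (hy : y ∈ C) : u ≤ φ y + F x * c := hf y (F x) ▸ hB _ ⟨hy, self_mem_Iic⟩
  have hc : c < 0 := by
    have h₀ : φ x₀ + (F x₀ + 1) * c < u := hf _ _ ▸ hint _ hA₀
    have h₁ := h_low x₀ hx₀C
    have h₂ : F x ≤ F x₀ := hmin ⟨hx₀C, mem_of_mem_nhds hx₀D⟩
    nlinarith
  have hd : 0 < -c⁻¹ := neg_pos.2 (inv_lt_zero.2 hc)
  have h_normalize (y : E) (t : ℝ) : ((-c⁻¹) • φ) y - t = -c⁻¹ * (φ y + t * c) := by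
    simp only [smul_apply, smul_eq_mul]
    linear_combination t * inv_mul_cancel₀ hc.ne
  refine ⟨(-c⁻¹) • φ, fun y hy => ?_, fun y hy => ?_⟩
  · rw [h_normalize, h_normalize]
    exact mul_le_mul_of_nonneg_left ((h_epi y hy).trans (h_low x hx.1)) hd.le
  · have key : φ x ≤ φ y := by linarith [h_epi x hx.2, h_low y hy]
    exact mul_le_mul_of_nonneg_left key hd.le

end ConvexAnalysis

theorem minimizer_in_banachic_kernel_general
    {E : Type*} [AddCommGroup E] [Module ℝ E] [TopologicalSpace E]
    [IsTopologicalAddGroup E] [ContinuousSMul ℝ E]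
    (Φ : E → EReal)
    (hne_bot : ∀ e : E, Φ e ≠ ⊥)
    (hconv : ∀ x y : E, ∀ a b : ℝ, 0 ≤ a → 0 ≤ b → a + b = 1 →
      Φ (a • x + b • y) ≤ (a : EReal) * Φ x + (b : EReal) * Φ y)
    (n : ℕ) (e' : Fin (n + 1) → (E →L[ℝ] ℝ)) (α : Fin (n + 1) → ℝ)
    (Γ : Set E) (hΓ : Γ = {e : E | ∀ k : Fin (n + 1), e' k e = α k})
    (hcont : ∃ e₀ ∈ Γ, Φ e₀ ≠ ⊤ ∧ ContinuousAt Φ e₀)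
    (ebar : E) (hebar : ebar ∈ Γ)
    (hfin : Φ ebar ≠ ⊤)
    (hmin : Φ ebar = ⨅ e ∈ Γ, Φ e) :
    ∃ lam : Fin (n + 1) → ℝ,
      Φ ebar + fenchelConj Φ (∑ k, lam k • e' k) =
        ((∑ k, lam k * α k : ℝ) : EReal) := by
  subst hΓ
  obtain ⟨e₀, he₀Γ, he₀fin, he₀cont⟩ := hcont
  have hΓconv : Convex ℝ {e : E | ∀ k, e' k e = α k} := by
    simpa only [Set.ofPred_forall, ContinuousLinearMap.coe_coe] using
      convex_iInter fun k => convex_hyperplane (e' k : E →ₗ[ℝ] ℝ).isLinear (α k)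
  have hdom : {x | Φ x ≠ ⊤} ∈ 𝓝 e₀ :=
    (he₀cont.eventually (Iio_mem_nhds he₀fin.lt_top)).mono fun _ h => h.ne
  have hFcont : ContinuousAt (fun x => (Φ x).toReal) e₀ :=
    (EReal.tendsto_toReal he₀fin (hne_bot e₀)).comp he₀cont
  have hFmin : IsMinOn (fun x => (Φ x).toReal) ({e | ∀ k, e' k e = α k} ∩ {x | Φ x ≠ ⊤}) ebar :=
    fun y ⟨hyΓ, hyfin⟩ => EReal.toReal_le_toReal (hmin ▸ iInf₂_le y hyΓ) (hne_bot _) hyfin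
  obtain ⟨g, hsub, hgΓ⟩ := exists_subgradient_of_isMinOn_inter hΓconv
    (convexOn_toReal_of_ereal hne_bot hconv) he₀Γ hdom hFcont ⟨hebar, hfin⟩ hFmin
  obtain ⟨lam, rfl⟩ := exists_sum_smul_eq_of_le_on_level e' α hebar hgΓ
  refine ⟨lam, ?_⟩
  rw [fenchelConj_eq_of_forall_sub_le hne_bot hfin hsub]
  nth_rw 1 [← EReal.coe_toReal hfin (hne_bot ebar)]
  rw [← EReal.coe_add, add_sub_cancel, EReal.coe_eq_coe_iff]
  simp [show ∀ k, e' k ebar = α k from hebar]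

/-- if `Φ` is a proper convex lsc functional on a real Hausdorff locally
convex space, finite and continuous at some point of the affine constraint set
`Γ = {e : e'_k e = α_k, k = 0,…,n}`, and `ē ∈ Γ` attains the finite infimum of `Φ` over
`Γ`, then there are multipliers `λ̄₀, …, λ̄ₙ ∈ ℝ` with
`Φ ē + Φ*(∑ λ̄_k e'_k) = ∑ λ̄_k α_k`, i.e. `ē ∈ ∂Φ*(∑ λ̄_k e'_k) = B_Φ(∑ λ̄_k e'_k)`. -/
theorem minimizer_in_banachic_kernel
    {E : Type*} [AddCommGroup E] [Module ℝ E] [TopologicalSpace E]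
    [IsTopologicalAddGroup E] [ContinuousSMul ℝ E] [LocallyConvexSpace ℝ E] [T2Space E]
    (Φ : E → EReal)
    (hne_bot : ∀ e : E, Φ e ≠ ⊥)
    (hproper : ∃ e : E, Φ e ≠ ⊤)
    (hconv : ∀ x y : E, ∀ a b : ℝ, 0 ≤ a → 0 ≤ b → a + b = 1 →
      Φ (a • x + b • y) ≤ (a : EReal) * Φ x + (b : EReal) * Φ y)
    (hlsc : LowerSemicontinuous Φ)
    (n : ℕ) (e' : Fin (n + 1) → (E →L[ℝ] ℝ)) (α : Fin (n + 1) → ℝ)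
    (Γ : Set E) (hΓ : Γ = {e : E | ∀ k : Fin (n + 1), e' k e = α k})
    (hcont : ∃ e₀ ∈ Γ, Φ e₀ ≠ ⊤ ∧ ContinuousAt Φ e₀)
    (ebar : E) (hebar : ebar ∈ Γ)
    (hfin : Φ ebar ≠ ⊤)
    (hmin : Φ ebar = ⨅ e ∈ Γ, Φ e) :
    ∃ lam : Fin (n + 1) → ℝ,
      Φ ebar + fenchelConj Φ (∑ k, lam k • e' k) =
        ((∑ k, lam k * α k : ℝ) : EReal) :=
  minimizer_in_banachic_kernel_general Φ hne_bot hconv n e' α Γ hΓ hcont ebar hebar hfin hmin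
end

section
/- Let m ≥ 2 be an integer, h > 0 and t ∈ ℝ, and let B(s) = Σ_{l=0}^{m} (−1)^{m−l} (m choose l) ((t + l·h − s)₊)^{m−1}, where u₊ = max(u,0). Then B(s) ≥ 0 for every s ∈ ℝ. -/
/-!
`B(s)` is the `m`-th forward difference with step `h`, taken at `t`, of `x ↦ ((x - s)₊)^(m-1)`.
By the fundamental theorem of calculus, `Δ_h (u₊^(n+1))(x) = ∫₀ʰ (n+1) (x+v)₊^n dv`, and
forward differences commute with this averaging, so `Δ_h^(n+2) (u₊^(n+1))` is a positive
multiple of an average of translates of `Δ_h^(n+1) (u₊^n)`. Induction on `n` reduces everything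
to `Δ_h² u₊ ≥ 0`, i.e. to the convexity of `u₊`.
-/

open Set

noncomputable def truncPow (n : ℕ) (u : ℝ) : ℝ := max u 0 ^ n

theorem continuous_truncPow (n : ℕ) : Continuous (truncPow n) := by
  unfold truncPow; fun_prop

-- `truncPow 0 = 1` is not the Heaviside function (`0 ^ 0 = 1`), hence `n ≠ 0`.
theorem hasDerivWithinAt_Ioi_truncPow_succ {n : ℕ} (hn : n ≠ 0) (u : ℝ) :
    HasDerivWithinAt (truncPow (n + 1)) ((n + 1) * truncPow n u) (Ioi u) u := by
  rcases lt_or_ge u 0 with hu | hu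
  · have hzero : truncPow (n + 1) =ᶠ[nhds u] fun _ => 0 := by
      filter_upwards [Iio_mem_nhds hu] with v hv
      simp [truncPow, max_eq_right (le_of_lt (mem_Iio.mp hv))]
    have hzero' : truncPow n u = 0 := by simp [truncPow, max_eq_right hu.le, hn]
    rw [hzero', mul_zero]
    exact ((hasDerivAt_const u (0 : ℝ)).congr_of_eventuallyEq hzero).hasDerivWithinAt
  · have hpow : EqOn (truncPow (n + 1)) (· ^ (n + 1)) (Ioi u) := fun v hv => by
      simp [truncPow, max_eq_left (hu.trans (le_of_lt (mem_Ioi.mp hv)))]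
    have hpow' : truncPow n u = u ^ n := by simp [truncPow, max_eq_left hu]
    rw [hpow', ← Nat.cast_add_one]
    exact (hasDerivAt_pow (n + 1) u).hasDerivWithinAt.congr hpow
      (by simp [truncPow, max_eq_left hu])

theorem fwdDiff_eq_integral_of_hasDerivWithinAt_Ioi {E : Type*} [NormedAddCommGroup E]
    [NormedSpace ℝ E] [CompleteSpace E] {f f' : ℝ → E} (hf : Continuous f)
    (hf' : Continuous f') (hderiv : ∀ x, HasDerivWithinAt f (f' x) (Ioi x) x) {h : ℝ}
    (hh : 0 ≤ h) (x : ℝ) :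
    fwdDiff h f x = ∫ v in 0..h, f' (x + v) := by
  rw [intervalIntegral.integral_comp_add_left, add_zero,
    intervalIntegral.integral_eq_sub_of_hasDeriv_right_of_le (by linarith) hf.continuousOn
      (fun y _ => hderiv y) (hf'.intervalIntegrable _ _), fwdDiff]

theorem fwdDiff_iter_integral_comp_add {E : Type*} [NormedAddCommGroup E] [NormedSpace ℝ E]
    {g : ℝ → E} (hg : Continuous g) (h a b : ℝ) (k : ℕ) (x : ℝ) :
    (fwdDiff h)^[k] (fun y => ∫ v in a..b, g (y + v)) x =
      ∫ v in a..b, (fwdDiff h)^[k] g (x + v) := by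
  induction k generalizing g x with
  | zero => rfl
  | succ k ih =>
    have hint : ∀ c, IntervalIntegrable (fun v => g (c + v)) MeasureTheory.volume a b :=
      fun c => (hg.comp (continuous_const_add c)).intervalIntegrable a b
    have hstep : fwdDiff h (fun y => ∫ v in a..b, g (y + v)) =
        fun y => ∫ v in a..b, fwdDiff h g (y + v) := by
      funext y
      simp only [fwdDiff, ← intervalIntegral.integral_sub (hint (y + h)) (hint y), add_right_comm]
    have hg' : Continuous (fwdDiff h g) := (hg.comp (continuous_add_const h)).sub hg
    rw [Function.iterate_succ_apply, hstep, ih hg']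
    rfl

theorem fwdDiff_iter_truncPow_nonneg {h : ℝ} (hh : 0 ≤ h) {n : ℕ} (hn : n ≠ 0) (x : ℝ) :
    0 ≤ (fwdDiff h)^[n + 1] (truncPow n) x := by
  induction n, Nat.one_le_iff_ne_zero.mpr hn using Nat.le_induction generalizing x with
  | base =>
    simp only [Function.iterate_succ_apply', Function.iterate_zero_apply, fwdDiff, truncPow,
      pow_one]
    rcases le_total (x + h) 0 with hxh | hxh
    · linarith [max_eq_right hxh, le_max_right (x + h + h) 0, le_max_right x 0]
    · linarith [max_eq_left hxh, le_max_left (x + h + h) 0, le_max_left x 0]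
  | succ n hn ih =>
    have hdiff : fwdDiff h (truncPow (n + 1)) =
        fun y => ∫ v in 0..h, ((n + 1 : ℝ) • truncPow n) (y + v) :=
      funext <| fwdDiff_eq_integral_of_hasDerivWithinAt_Ioi (continuous_truncPow _)
        ((continuous_truncPow n).const_smul _) (hasDerivWithinAt_Ioi_truncPow_succ (by omega)) hh
    rw [Function.iterate_succ_apply, hdiff,
      fwdDiff_iter_integral_comp_add ((continuous_truncPow n).const_smul _)]
    refine intervalIntegral.integral_nonneg hh fun v _ => ?_
    rw [fwdDiff_iter_const_smul, Pi.smul_apply]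
    exact smul_nonneg (by positivity) (ih (by omega) _)

/-- the (unnormalized) B-spline with equally spaced knots
`t, t+h, …, t+m·h`, `B(s) = ∑_{l=0}^{m} (−1)^{m−l} C(m,l) ((t + l·h − s)₊)^{m−1}`,
is nonnegative on all of `ℝ`. -/
theorem bspline_nonneg
    (m : ℕ) (hm : 2 ≤ m) (h : ℝ) (hh : 0 < h) (t : ℝ)
    (B : ℝ → ℝ)
    (hB : ∀ s : ℝ, B s = ∑ l ∈ Finset.range (m + 1),
      (-1 : ℝ) ^ (m - l) * (m.choose l) * (max (t + l * h - s) 0) ^ (m - 1)) :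
    ∀ s : ℝ, 0 ≤ B s := by
  intro s
  have hdiff : B s = (fwdDiff h)^[m] (fun y => truncPow (m - 1) (y + -s)) t := by
    rw [hB, fwdDiff_iter_eq_sum_shift]
    refine Finset.sum_congr rfl fun l _ => ?_
    simp [truncPow, sub_eq_add_neg]
  obtain ⟨n, rfl⟩ : ∃ n, m = n + 1 := ⟨m - 1, by omega⟩
  rw [hdiff, fwdDiff_iter_comp_add, Nat.add_sub_cancel]
  exact fwdDiff_iter_truncPow_nonneg (n := n) hh.le (by omega) _
end

section
/- (Peano kernel property of the B-spline.) Let m ≥ 2 be an integer, h > 0 and t ∈ ℝ, and let B(s) = Σ_{l=0}^{m} (−1)^{m−l} (m choose l) ((t + l·h − s)₊)^{m−1}, where u₊ = max(u,0). Then for every m times continuously differentiable function y : ℝ → ℝ, ∫_ℝ y^{(m)}(s) · B(s)/(m−1)! ds = Σ_{l=0}^{m} (−1)^{m−l} (m choose l) y(t + l·h); that is, integrating y^{(m)} against the B-spline kernel produces the m-th order finite difference D_h^m y(t) of y at the knots. -/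
open Finset Polynomial Set
open scoped Nat fwdDiff

/-!
Taylor's formula with integral remainder, taken at the left end `a` of an interval `[a, b]`
containing all the points `xᵢ`, writes `f (xᵢ)` as a polynomial of degree `≤ n` in `xᵢ` plus
`∫ₐᵇ f⁽ⁿ⁺¹⁾(u) (xᵢ - u)₊ⁿ / n! du`. A linear combination `∑ cᵢ f (xᵢ)` that kills polynomials of
degree `≤ n` therefore equals `∫ f⁽ⁿ⁺¹⁾ K` for the Peano kernel `K = ∑ cᵢ (xᵢ - ·)₊ⁿ / n!`, which
vanishes off `[a, b]`: to the right every truncated power is zero, to the left `K` is a polynomial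
of degree `≤ n` evaluated by the same combination. The `m`-th forward difference
`∑ (-1)ᵐ⁻ˡ C(m, l) f (t + l h)` kills polynomials of degree `< m`, and its Peano kernel is
`B / (m - 1)!`.
-/

theorem sum_alternating_choose_mul_eval_eq_zero {R : Type*} [CommRing R] {m : ℕ} {P : R[X]}
    (hP : P.natDegree < m) (t h : R) :
    ∑ l ∈ range (m + 1), (-1 : R) ^ (m - l) * m.choose l * P.eval (t + l * h) = 0 := by
  set Q := P.comp (C h * X + C t)
  have hQ : Q.natDegree < m :=
    natDegree_comp_le.trans_lt (by nlinarith [natDegree_linear_le (a := h) (b := t)])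
  have := congr_fun (fwdDiff_iter_eq_zero_of_degree_lt hQ) 0
  rw [fwdDiff_iter_eq_sum_shift] at this
  simpa [Q, add_comm t, mul_comm h] using this

theorem taylor_integral_remainder_truncatedPower {f : ℝ → ℝ} {n : ℕ} (hn : n ≠ 0)
    (hf : ContDiff ℝ (n + 1) f) {a x b : ℝ} (hax : a ≤ x) (hxb : x ≤ b) :
    f x = ∑ k ∈ range (n + 1), iteratedDeriv k f a * (x - a) ^ k / k ! +
      ∫ u in a..b, iteratedDeriv (n + 1) f u * max (x - u) 0 ^ n / n ! := by
  have hcont : Continuous fun u ↦ iteratedDeriv (n + 1) f u * max (x - u) 0 ^ n / n ! := by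
    have := hf.continuous_iteratedDeriv (n + 1) le_rfl
    fun_prop
  have taylor : f x - ∑ k ∈ range (n + 1), iteratedDeriv k f a * (x - a) ^ k / k ! =
      ∫ u in a..x, iteratedDeriv (n + 1) f u * max (x - u) 0 ^ n / n ! := by
    rcases hax.eq_or_lt with rfl | hlt
    · simp [sum_range_succ']
    have hs : UniqueDiffOn ℝ (uIcc a x) := uniqueDiffOn_uIcc hlt.ne
    have hwithin {k : ℕ} (hk : k ≤ n + 1) {u : ℝ} (hu : u ∈ uIcc a x) :
        iteratedDerivWithin k f (uIcc a x) u = iteratedDeriv k f u :=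
      iteratedDerivWithin_eq_iteratedDeriv hs (hf.contDiffAt.of_le (by exact_mod_cast hk)) hu
    convert taylor_integral_remainder (f := f) (x₀ := a) (x := x) hf.contDiffOn using 1
    · rw [taylor_within_apply]
      congr 1
      refine sum_congr rfl fun k hk ↦ ?_
      rw [hwithin (by grind) left_mem_uIcc, smul_eq_mul]
      ring
    · refine intervalIntegral.integral_congr fun u hu ↦ ?_
      rw [hwithin le_rfl hu, max_eq_left (by linarith [(uIcc_of_le hax ▸ hu).2]), smul_eq_mul]
      ring
  have tail : ∫ u in x..b, iteratedDeriv (n + 1) f u * max (x - u) 0 ^ n / n ! = 0 := by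
    refine (intervalIntegral.integral_congr fun u hu ↦ ?_).trans intervalIntegral.integral_zero
    rw [uIcc_of_le hxb] at hu
    simp [max_eq_right (by linarith [hu.1] : x - u ≤ 0), hn]
  rw [← intervalIntegral.integral_add_adjacent_intervals (hcont.intervalIntegrable a x)
    (hcont.intervalIntegrable x b), tail, add_zero, ← taylor]
  ring

noncomputable def peanoKernel {ι : Type*} (s : Finset ι) (c x : ι → ℝ) (n : ℕ) (u : ℝ) : ℝ :=
  (∑ i ∈ s, c i * max (x i - u) 0 ^ n) / n !

section PeanoKernel

variable {ι : Type*} {s : Finset ι} {c x : ι → ℝ} {n : ℕ}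

theorem sum_mul_sub_pow_eq_zero
    (hpoly : ∀ P : ℝ[X], P.natDegree ≤ n → ∑ i ∈ s, c i * P.eval (x i) = 0)
    {k : ℕ} (hk : k ≤ n) (z : ℝ) : ∑ i ∈ s, c i * (x i - z) ^ k = 0 := by
  have hdeg : ((X - C z) ^ k).natDegree ≤ n :=
    (natDegree_pow_le_of_le k (natDegree_X_sub_C_le z)).trans (by omega)
  simpa using hpoly _ hdeg

variable {a b : ℝ}

theorem sum_mul_eq_intervalIntegral_peanoKernel (hn : n ≠ 0) (hx : ∀ i ∈ s, x i ∈ Icc a b)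
    (hpoly : ∀ P : ℝ[X], P.natDegree ≤ n → ∑ i ∈ s, c i * P.eval (x i) = 0)
    {f : ℝ → ℝ} (hf : ContDiff ℝ (n + 1) f) :
    ∑ i ∈ s, c i * f (x i) = ∫ u in a..b, iteratedDeriv (n + 1) f u * peanoKernel s c x n u := by
  have taylorPart : ∑ i ∈ s, c i *
      ∑ k ∈ range (n + 1), iteratedDeriv k f a * (x i - a) ^ k / k ! = 0 := by
    simp_rw [mul_sum]
    rw [sum_comm]
    refine sum_eq_zero fun k hk ↦ ?_
    calc ∑ i ∈ s, c i * (iteratedDeriv k f a * (x i - a) ^ k / k !)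
        = iteratedDeriv k f a / k ! * ∑ i ∈ s, c i * (x i - a) ^ k := by
          rw [mul_sum]
          exact sum_congr rfl fun _ _ ↦ by ring
      _ = 0 := by rw [sum_mul_sub_pow_eq_zero hpoly (by grind) a, mul_zero]
  have remainderPart : ∑ i ∈ s, c i *
      ∫ u in a..b, iteratedDeriv (n + 1) f u * max (x i - u) 0 ^ n / n ! =
      ∫ u in a..b, iteratedDeriv (n + 1) f u * peanoKernel s c x n u := by
    have := hf.continuous_iteratedDeriv (n + 1) le_rfl
    simp_rw [← intervalIntegral.integral_const_mul]
    rw [← intervalIntegral.integral_finsetSum fun i _ ↦ by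
      apply Continuous.intervalIntegrable; fun_prop]
    refine intervalIntegral.integral_congr fun u _ ↦ ?_
    rw [peanoKernel, mul_div_assoc', mul_sum, sum_div]
    exact sum_congr rfl fun _ _ ↦ by ring
  rw [← remainderPart, sum_congr rfl fun i hi ↦ by
    rw [taylor_integral_remainder_truncatedPower hn hf (hx i hi).1 (hx i hi).2, mul_add],
    sum_add_distrib, taylorPart, zero_add]

theorem support_peanoKernel_subset (hn : n ≠ 0) (hx : ∀ i ∈ s, x i ∈ Icc a b)
    (hpoly : ∀ P : ℝ[X], P.natDegree ≤ n → ∑ i ∈ s, c i * P.eval (x i) = 0) :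
    Function.support (peanoKernel s c x n) ⊆ Ioc a b := by
  refine Function.support_subset_iff'.2 fun u hu ↦ div_eq_zero_iff.2 (Or.inl ?_)
  rcases le_or_gt u a with hua | hau
  · refine (sum_congr rfl fun i hi ↦ ?_).trans (sum_mul_sub_pow_eq_zero hpoly le_rfl u)
    rw [max_eq_left (by linarith [(hx i hi).1])]
  · have hbu : b < u := lt_of_not_ge fun hub ↦ hu ⟨hau, hub⟩
    refine sum_eq_zero fun i hi ↦ ?_
    rw [max_eq_right (by linarith [(hx i hi).2]), zero_pow hn, mul_zero]

theorem sum_mul_eq_integral_peanoKernel (hn : n ≠ 0) (hx : ∀ i ∈ s, x i ∈ Icc a b)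
    (hpoly : ∀ P : ℝ[X], P.natDegree ≤ n → ∑ i ∈ s, c i * P.eval (x i) = 0)
    {f : ℝ → ℝ} (hf : ContDiff ℝ (n + 1) f) :
    ∑ i ∈ s, c i * f (x i) = ∫ u, iteratedDeriv (n + 1) f u * peanoKernel s c x n u := by
  rw [sum_mul_eq_intervalIntegral_peanoKernel hn hx hpoly hf,
    intervalIntegral.integral_eq_integral_of_support_subset]
  exact (Function.support_mul_subset_right _ _).trans (support_peanoKernel_subset hn hx hpoly)

end PeanoKernel

/-- Peano kernel property of the B-spline: for the unnormalized B-spline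
`B(s) = ∑_{l=0}^{m} (−1)^{m−l} C(m,l) ((t + l·h − s)₊)^{m−1}` with equally spaced knots
`t, t+h, …, t+m·h` and any `m` times continuously differentiable `y : ℝ → ℝ`,
`∫ y⁽ᵐ⁾(s) B(s)/(m−1)! ds = ∑_{l=0}^{m} (−1)^{m−l} C(m,l) y(t + l·h)`, the `m`-th order
finite difference of `y` at the knots. -/
theorem bspline_peano_kernel
    (m : ℕ) (hm : 2 ≤ m) (h : ℝ) (hh : 0 < h) (t : ℝ)
    (B : ℝ → ℝ)
    (hB : ∀ s : ℝ, B s = ∑ l ∈ Finset.range (m + 1),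
      (-1 : ℝ) ^ (m - l) * (m.choose l) * (max (t + l * h - s) 0) ^ (m - 1)) :
    ∀ y : ℝ → ℝ, ContDiff ℝ m y →
      ∫ s : ℝ, iteratedDeriv m y s * B s / (Nat.factorial (m - 1)) =
        ∑ l ∈ Finset.range (m + 1),
          (-1 : ℝ) ^ (m - l) * (m.choose l) * y (t + l * h) := by
  intro y hy
  obtain ⟨n, rfl⟩ : ∃ n, m = n + 1 := ⟨m - 1, by omega⟩
  rw [Nat.add_sub_cancel] at hB ⊢
  have hkernel (s : ℝ) : B s / n ! = peanoKernel (range (n + 2))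
      (fun l ↦ (-1) ^ (n + 1 - l) * (n + 1).choose l) (fun l ↦ t + l * h) n s := by
    rw [hB, peanoKernel]
  have hknots : ∀ l ∈ range (n + 2), t + l * h ∈ Icc t (t + (n + 1 : ℕ) * h) := fun l hl ↦
    ⟨by nlinarith [l.cast_nonneg (α := ℝ)], by
      gcongr; exact_mod_cast Nat.le_of_lt_succ (mem_range.1 hl)⟩
  simp_rw [mul_div_assoc, hkernel]
  exact (sum_mul_eq_integral_peanoKernel (by omega) hknots
    (fun P hP ↦ sum_alternating_choose_mul_eval_eq_zero (by omega) t h) (by exact_mod_cast hy)).symm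
end
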